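/- arXiv:1903.09850 — 2 statements merged into one kernel-verified Lean document; each statement's English description precedes it below -/
import Mathlib

section
/- Let AD be an action description of AL_IR and τ(AD) its transition diagram. If ⟨σ₀,a₀,σ₁⟩ is a transition of τ(AD), then there exist a qualifier q₀ ⊆ 𝓕 and an answer set A of the ASP program Φ¹(σ₀,a₀,q₀) such that σ₁ = {l | χ(l,1) ∈ A} ∪ {u(f) | u(f,1) ∈ A}. -/
/- Formalization of the action language AL_IR, its transition-diagram semantics,
   forcing/completion/conservative expansion, the ASP translation, and the
   FindMatch algorithm, following Balduccini & LeBlanc,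
   "Action-Centered Information Retrieval". -/

namespace ACIR

/-- Extended literals over a set `F` of fluents: a fluent `f`, its negation `¬f`,
or the expression `u(f)` ("unknown"). -/
inductive ELit (F : Type) : Type
  | pos : F → ELit F
  | neg : F → ELit F
  | und : F → ELit F

/-- Fluent literals: a fluent or its negation. -/
inductive FLit (F : Type) : Type
  | pos : F → FLit F
  | neg : F → FLit F

/-- The extended literal corresponding to a fluent literal. -/
def FLit.toE {F : Type} : FLit F → ELit F
  | .pos f => .pos f
  | .neg f => .neg f

/-- An extended literal is a (proper) fluent literal, i.e. not of the form `u(f)`. -/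
def ELit.isLit {F : Type} : ELit F → Prop
  | .pos _ => True
  | .neg _ => True
  | .und _ => False

/-- The fluent occurring in an extended literal. -/
def ELit.fluent {F : Type} : ELit F → F
  | .pos f => f
  | .neg f => f
  | .und f => f

/-- A set of extended literals consists solely of fluent literals. -/
def IsLitSet {F : Type} (S : Set (ELit F)) : Prop := ∀ l ∈ S, l.isLit

/-- A set of extended literals is consistent: for every fluent `f`, at most one of
`f`, `¬f`, `u(f)` belongs to it. -/
def ConsistentE {F : Type} (S : Set (ELit F)) : Prop :=
  ∀ f : F, ¬ (ELit.pos f ∈ S ∧ ELit.neg f ∈ S) ∧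
           ¬ (ELit.pos f ∈ S ∧ ELit.und f ∈ S) ∧
           ¬ (ELit.neg f ∈ S ∧ ELit.und f ∈ S)

/-- A set of extended literals is complete: for every fluent `f`, at least one of
`f`, `¬f`, `u(f)` belongs to it. -/
def CompleteE {F : Type} (S : Set (ELit F)) : Prop :=
  ∀ f : F, ELit.pos f ∈ S ∨ ELit.neg f ∈ S ∨ ELit.und f ∈ S

/-- A state constraint `l₀ if l₁,…,lₙ` (head and body are fluent literals). -/
structure StateConstraint (F : Type) : Type where
  head : FLit F
  body : List (FLit F)

/-- A dynamic law `e causes λ if l₁,…,lₙ` (the consequence is an extended literal). -/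
structure DynamicLaw (F E : Type) : Type where
  act : E
  eff : ELit F
  cond : List (FLit F)

/-- An executability condition `e impossible_if l₁,…,lₙ`. -/
structure ExecCond (F E : Type) : Type where
  act : E
  cond : List (FLit F)

/-- An action description of AL_IR. -/
structure ActionDesc (F E : Type) : Type where
  dyn : Set (DynamicLaw F E)
  sc : Set (StateConstraint F)
  exec : Set (ExecCond F E)

/-- `S` is closed under the state constraint `c`: either the body is not contained
in `S` or the head belongs to `S`. -/
def ClosedUnderSC {F : Type} (c : StateConstraint F) (S : Set (ELit F)) : Prop :=
  (∀ l ∈ c.body, l.toE ∈ S) → c.head.toE ∈ S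

/-- `Cn Z S`: the smallest set of extended literals containing `S` and closed
under every state constraint in `Z`. -/
def Cn {F : Type} (Z : Set (StateConstraint F)) (S : Set (ELit F)) : Set (ELit F) :=
  ⋂₀ {T | S ⊆ T ∧ ∀ c ∈ Z, ClosedUnderSC c T}

/-- A state of an action description: a complete and consistent set of extended
literals closed under the state constraints. -/
def IsState {F E : Type} (AD : ActionDesc F E) (σ : Set (ELit F)) : Prop :=
  CompleteE σ ∧ ConsistentE σ ∧ ∀ c ∈ AD.sc, ClosedUnderSC c σ

/-- The direct effects `E(a,σ)` of action `a` (a set of elementary actions) in `σ`. -/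
def directEff {F E : Type} (AD : ActionDesc F E) (a : Set E) (σ : Set (ELit F)) :
    Set (ELit F) :=
  {lam | ∃ d ∈ AD.dyn, d.act ∈ a ∧ (∀ l ∈ d.cond, l.toE ∈ σ) ∧ lam = d.eff}

/-- The expansion `𝔼(a,σ)`: the join of the fluent-literal part of `E(a,σ)` with
`{f,¬f,u(f)}` for every fluent `f` with `u(f) ∈ E(a,σ)`. -/
def expansion {F E : Type} (AD : ActionDesc F E) (a : Set E) (σ : Set (ELit F)) :
    Set (Set (ELit F)) :=
  {W | ∃ c : F → ELit F,
    (∀ f : F, ELit.und f ∈ directEff AD a σ →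
      (c f = ELit.pos f ∨ c f = ELit.neg f ∨ c f = ELit.und f)) ∧
    W = {l ∈ directEff AD a σ | l.isLit} ∪
        {l | ∃ f : F, ELit.und f ∈ directEff AD a σ ∧ l = c f}}

/-- Action `a` is executable in `σ`: no executability condition applies. -/
def Executable {F E : Type} (AD : ActionDesc F E) (a : Set E) (σ : Set (ELit F)) : Prop :=
  ¬ ∃ ec ∈ AD.exec, ec.act ∈ a ∧ ∀ l ∈ ec.cond, l.toE ∈ σ

/-- `⟨σ,a,σ'⟩` is a transition of the transition diagram `τ(AD)`:
`σ`,`σ'` are states, `a` is executable in `σ`, and the expanded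
successor-state equation holds for some `W ∈ 𝔼(a,σ)`. -/
def IsTransition {F E : Type} (AD : ActionDesc F E)
    (σ : Set (ELit F)) (a : Set E) (σ' : Set (ELit F)) : Prop :=
  IsState AD σ ∧ IsState AD σ' ∧ Executable AD a σ ∧
  ∃ W ∈ expansion AD a σ, σ' = Cn AD.sc (W ∪ (σ ∩ σ'))

/-- A sequence `⟨σ₀,a₀,σ₁,…,a_{n-1},σ_n⟩`. -/
structure Path (F E : Type) (n : ℕ) : Type where
  states : Fin (n + 1) → Set (ELit F)
  acts : Fin n → Set E

/-- `π` is a path of `τ(AD)`: every triple is a transition. -/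
def IsPath {F E : Type} {n : ℕ} (AD : ActionDesc F E) (π : Path F E n) : Prop :=
  ∀ i : Fin n, IsTransition AD (π.states i.castSucc) (π.acts i) (π.states i.succ)

/-- The branching-set of a transition. -/
def branchSet {F E : Type} (AD : ActionDesc F E)
    (σ : Set (ELit F)) (a : Set E) (σ' : Set (ELit F)) : Set F :=
  {f | ELit.und f ∈ directEff AD a σ ∧ ELit.und f ∉ σ'}

/-- A qualified action sequence `⟨a₀/q₀,…,a_{n-1}/q_{n-1}⟩`. -/
structure QSeq (F E : Type) (n : ℕ) : Type where
  acts : Fin n → Set E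
  quals : Fin n → Set F

/-- The branching degree `Δ(s) = |q₀| + ⋯ + |q_{n-1}|`. -/
noncomputable def QSeq.degree {F E : Type} {n : ℕ} (s : QSeq F E n) : ℕ :=
  ∑ i : Fin n, (s.quals i).ncard

/-- `s` extends the action sequence `ℵ` (any choice of qualifiers). -/
def QSeq.Extends {F E : Type} {n : ℕ} (s : QSeq F E n) (ℵ : Fin n → Set E) : Prop :=
  s.acts = ℵ

/-- `ℵ^×`: the extension of `ℵ` in which every qualifier is the whole set `𝓕`. -/
def qall {F E : Type} {n : ℕ} (ℵ : Fin n → Set E) : QSeq F E n :=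
  ⟨ℵ, fun _ => Set.univ⟩

/-- `ℵ^?`: the extension of `ℵ` in which every qualifier is empty. -/
def qnone {F E : Type} {n : ℕ} (ℵ : Fin n → Set E) : QSeq F E n :=
  ⟨ℵ, fun _ => ∅⟩

/-- The empty qualified action sequence `⟨⟩`. -/
def emptyQ {F E : Type} : QSeq F E 0 := ⟨fun i => i.elim0, fun i => i.elim0⟩

/-- `π` is a model of `[Σ, s]`: `π` is a path of `τ(AD)` starting at some state of
`Σ`, executing the actions of `s`, and the branching-set of each transition equals
the corresponding qualifier. -/
def IsModel {F E : Type} {n : ℕ} (AD : ActionDesc F E) (π : Path F E n)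
    (Sig : Set (Set (ELit F))) (s : QSeq F E n) : Prop :=
  IsPath AD π ∧ π.states 0 ∈ Sig ∧ π.acts = s.acts ∧
  ∀ i : Fin n, branchSet AD (π.states i.castSucc) (π.acts i) (π.states i.succ) = s.quals i

/-- `π` entails the fluent literal `l`: `l` belongs to the final state of `π`. -/
def Entails {F E : Type} {n : ℕ} (π : Path F E n) (l : FLit F) : Prop :=
  l.toE ∈ π.states (Fin.last n)

/-- `π ⊨ ±q`: `π` entails `q` or `π` entails `¬q`. -/
def EntailsPM {F E : Type} {n : ℕ} (π : Path F E n) (q : F) : Prop :=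
  Entails π (FLit.pos q) ∨ Entails π (FLit.neg q)

/-! ### Forcing, completion, conservative expansion -/

/-- The possible "added" sets in the forcing `I[f]` of a fluent `f` in `I`,
relative to the set `D` of default fluents. -/
def forceChoices {F : Type} (D : Set F) (I : Set (ELit F)) (f : F) :
    Set (Set (ELit F)) :=
  {X | (f ∈ D ∧ ELit.neg f ∉ I ∧ ELit.und f ∉ I ∧ X = {ELit.pos f})
     ∨ (f ∉ D ∧ ELit.pos f ∉ I ∧ ELit.neg f ∉ I ∧ ELit.und f ∉ I ∧
          (X = {ELit.pos f} ∨ X = {ELit.neg f}))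
     ∨ (¬ ((f ∈ D ∧ ELit.neg f ∉ I ∧ ELit.und f ∉ I) ∨
           (f ∉ D ∧ ELit.pos f ∉ I ∧ ELit.neg f ∉ I ∧ ELit.und f ∉ I)) ∧ X = ∅)}

/-- The forcing `I[f]` of a single fluent `f` in `I`. -/
def forceOne {F : Type} (D : Set F) (I : Set (ELit F)) (f : F) :
    Set (Set (ELit F)) :=
  {J | ∃ X ∈ forceChoices D I f, J = I ∪ X}

/-- The forcing `I[Fs]` of a set `Fs` of fluents in `I`: each fluent of `Fs` is
forced independently (the recursive definition of the paper). -/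
def forceSet {F : Type} (D : Set F) (I : Set (ELit F)) (Fs : Set F) :
    Set (Set (ELit F)) :=
  {J | ∃ c : F → Set (ELit F),
        (∀ f ∈ Fs, c f ∈ forceChoices D I f) ∧ J = I ∪ ⋃ f ∈ Fs, c f}

/-- `Cn_Z(I')` where `I'` expands `I` by `¬f` for every default fluent `f ∉ I`. -/
def gammaBase {F E : Type} (D : Set F) (AD : ActionDesc F E) (I : Set (ELit F)) :
    Set (ELit F) :=
  Cn AD.sc (I ∪ {l | ∃ f ∈ D, ELit.pos f ∉ I ∧ l = ELit.neg f})

/-- The completion `γ(I)` exists iff `Cn_Z(I')` is consistent. -/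
def GammaExists {F E : Type} (D : Set F) (AD : ActionDesc F E) (I : Set (ELit F)) :
    Prop :=
  ConsistentE (gammaBase D AD I)

/-- Fluent `f` occurs in some literal of `S`. -/
def fOccurs {F : Type} (f : F) (S : Set (ELit F)) : Prop := ∃ l ∈ S, l.fluent = f

/-- The completion `γ(I)`: `Cn_Z(I')` together with `u(f)` for every fluent `f`
occurring in no literal of `Cn_Z(I')` (meaningful when `GammaExists` holds). -/
def gamma {F E : Type} (D : Set F) (AD : ActionDesc F E) (I : Set (ELit F)) :
    Set (ELit F) :=
  gammaBase D AD I ∪ {l | ∃ f : F, ¬ fOccurs f (gammaBase D AD I) ∧ l = ELit.und f}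

/-- The completion `γ(I,Fs)` of `I` w.r.t. a set `Fs` of fluents:
`{γ(I') | I' ∈ I[Fs], γ(I') exists}`. Its degree is `|Fs|`. -/
def gammaSet {F E : Type} (D : Set F) (AD : ActionDesc F E)
    (I : Set (ELit F)) (Fs : Set F) : Set (Set (ELit F)) :=
  {J | ∃ I' ∈ forceSet D I Fs, GammaExists D AD I' ∧ J = gamma D AD I'}

/-- The family of sets `I' ∈ I[𝓕∖𝓓]` such that `γ(I')` exists and
`[γ(I'), ℵ^×]` has a model. -/
def epsFamily {F E : Type} (D : Set F) (AD : ActionDesc F E)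
    (I : Set (ELit F)) {n : ℕ} (ℵ : Fin n → Set E) : Set (Set (ELit F)) :=
  {I' | I' ∈ forceSet D I (Set.univ \ D) ∧ GammaExists D AD I' ∧
        ∃ π : Path F E n, IsModel AD π {gamma D AD I'} (qall ℵ)}

/-- The conservative expansion `ε(I,ℵ)` exists iff the family is nonempty. -/
def EpsExists {F E : Type} (D : Set F) (AD : ActionDesc F E)
    (I : Set (ELit F)) {n : ℕ} (ℵ : Fin n → Set E) : Prop :=
  (epsFamily D AD I ℵ).Nonempty

/-- The conservative expansion `ε(I,ℵ)`: the intersection of all members of the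
family (meaningful when `EpsExists` holds). -/
def eps {F E : Type} (D : Set F) (AD : ActionDesc F E)
    (I : Set (ELit F)) {n : ℕ} (ℵ : Fin n → Set E) : Set (ELit F) :=
  ⋂₀ epsFamily D AD I ℵ

/-! ### Matching and semantic score -/

/-- `Fs` and `s` witness that the source `⟨Ψ,𝓓,AD,I,ℵ⟩` is a match for query `q`:
conditions (c1) and (c2) of the paper. -/
def MatchWitness {F E : Type} (D : Set F) (AD : ActionDesc F E)
    {n : ℕ} (I : Set (ELit F)) (ℵ : Fin n → Set E) (q : F)
    (Fs : Set F) (s : QSeq F E n) : Prop :=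
  s.Extends ℵ ∧
  ∃ π : Path F E n,
    IsModel AD π (gammaSet D AD (eps D AD I ℵ) Fs) s ∧ EntailsPM π q ∧
    ∀ π' : Path F E 0,
      IsModel AD π' (gammaSet D AD (π.states 0 \ eps D AD I ℵ) ∅) emptyQ →
      (¬ EntailsPM π' q) ∨
      (Entails π' (FLit.neg q) ∧ Entails π (FLit.pos q)) ∨
      (Entails π' (FLit.pos q) ∧ Entails π (FLit.neg q))

/-- The source `⟨Ψ,𝓓,AD,I,ℵ⟩` is a match for the query `q`. -/
def IsMatch {F E : Type} (D : Set F) (AD : ActionDesc F E)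
    {n : ℕ} (I : Set (ELit F)) (ℵ : Fin n → Set E) (q : F) : Prop :=
  ∃ (Fs : Set F) (s : QSeq F E n), MatchWitness D AD I ℵ q Fs s

/-- The semantic score of the source w.r.t. `q`: the smallest value of
`Δ(γ(ε(I,ℵ),F)) + Δ(s) = |F| + Δ(s)` over all witnesses; `∞` if no match. -/
noncomputable def semScore {F E : Type} (D : Set F) (AD : ActionDesc F E)
    {n : ℕ} (I : Set (ELit F)) (ℵ : Fin n → Set E) (q : F) : ℕ∞ :=
  sInf {v : ℕ∞ | ∃ (Fs : Set F) (s : QSeq F E n),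
    MatchWitness D AD I ℵ q Fs s ∧ v = ((Fs.ncard + s.degree : ℕ) : ℕ∞)}

/-! ### Answer Set Programming -/

/-- ASP literals over a set `A` of ground atoms: an atom or its (classical) negation. -/
inductive ALit (A : Type) : Type
  | pos : A → ALit A
  | neg : A → ALit A

/-- The atom of an ASP literal. -/
def ALit.atom {A : Type} : ALit A → A
  | .pos a => a
  | .neg a => a

/-- An ASP rule `h₁ ∨ ⋯ ∨ h_k ← l₁,…,l_m, not l_{m+1},…, not l_n`. -/
structure Rule (A : Type) : Type where
  head : List (ALit A)
  bodyP : List (ALit A)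
  bodyN : List (ALit A)

/-- A fact. -/
def fact {A : Type} (l : ALit A) : Rule A := ⟨[l], [], []⟩

/-- A consistent set of ASP literals. -/
def AConsistent {A : Type} (S : Set (ALit A)) : Prop :=
  ∀ a : A, ¬ (ALit.pos a ∈ S ∧ ALit.neg a ∈ S)

/-- `S` is closed under the rule `r`. -/
def ClosedRule {A : Type} (r : Rule A) (S : Set (ALit A)) : Prop :=
  ((∀ l ∈ r.bodyP, l ∈ S) ∧ (∀ l ∈ r.bodyN, l ∉ S)) → ∃ h ∈ r.head, h ∈ S

/-- The reduct `Π^S`. -/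
def Reduct {A : Type} (P : Set (Rule A)) (S : Set (ALit A)) : Set (Rule A) :=
  {r' | ∃ r ∈ P, (∀ l ∈ r.bodyN, l ∉ S) ∧ r' = ⟨r.head, r.bodyP, []⟩}

/-- `S` is an answer set of a `not`-free program: a minimal consistent set closed
under all rules. -/
def IsAnswerSetNF {A : Type} (P : Set (Rule A)) (S : Set (ALit A)) : Prop :=
  AConsistent S ∧ (∀ r ∈ P, ClosedRule r S) ∧
  ∀ T : Set (ALit A), AConsistent T → (∀ r ∈ P, ClosedRule r T) → T ⊆ S → T = S

/-- `S` is an answer set of `P`: `S` is an answer set of the reduct `P^S`. -/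
def IsAnswerSet {A : Type} (P : Set (Rule A)) (S : Set (ALit A)) : Prop :=
  IsAnswerSetNF (Reduct P S) S

/-! ### The ASP translation of AL_IR -/

/-- Ground atoms of the translation. -/
inductive PAtom (F E : Type) : Type
  | holds : F → ℕ → PAtom F E
  | u : F → ℕ → PAtom F E
  | occurs : E → ℕ → PAtom F E
  | split : F → ℕ → PAtom F E
  | init : F → PAtom F E
  | forced : F → PAtom F E
  | dflt : F → PAtom F E

/-- `χ(l,t)`: `holds(f,t)` if `l = f`, `¬holds(f,t)` if `l = ¬f`. -/
def chi {F E : Type} : FLit F → ℕ → ALit (PAtom F E)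
  | .pos f, t => .pos (.holds f t)
  | .neg f, t => .neg (.holds f t)

/-- The rules translating the laws of `AD` (for `n` time steps), together with the
consistency constraints and the inertia axioms. -/
def CoreProg {F E : Type} (AD : ActionDesc F E) (n : ℕ) : Set (Rule (PAtom F E)) :=
  -- dynamic laws with a fluent-literal consequence
  {r | ∃ d ∈ AD.dyn, ∃ t : ℕ, t < n ∧ ∃ l : FLit F, d.eff = l.toE ∧
      r = ⟨[chi l (t+1)],
           .pos (.occurs d.act t) :: d.cond.map (fun b => chi b t), []⟩} ∪
  -- dynamic laws with consequence u(f): non-split rule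
  {r | ∃ d ∈ AD.dyn, ∃ t : ℕ, t < n ∧ ∃ f : F, d.eff = ELit.und f ∧
      r = ⟨[.pos (.u f (t+1))],
           .pos (.occurs d.act t) :: d.cond.map (fun b => chi b t),
           [.pos (.split f t)]⟩} ∪
  -- dynamic laws with consequence u(f): split rule
  {r | ∃ d ∈ AD.dyn, ∃ t : ℕ, t < n ∧ ∃ f : F, d.eff = ELit.und f ∧
      r = ⟨[chi (FLit.pos f) (t+1), chi (FLit.neg f) (t+1)],
           .pos (.occurs d.act t) :: .pos (.split f t) ::
             d.cond.map (fun b => chi b t), []⟩} ∪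
  -- state constraints
  {r | ∃ c ∈ AD.sc, ∃ t : ℕ, t ≤ n ∧
      r = ⟨[chi c.head t], c.body.map (fun b => chi b t), []⟩} ∪
  -- executability conditions
  {r | ∃ ec ∈ AD.exec, ∃ t : ℕ, t < n ∧
      r = ⟨[], .pos (.occurs ec.act t) :: ec.cond.map (fun b => chi b t), []⟩} ∪
  -- consistency constraints
  {r | ∃ f : F, ∃ t : ℕ, t ≤ n ∧
      r = ⟨[], [chi (FLit.pos f) t, .pos (.u f t)], []⟩} ∪
  {r | ∃ f : F, ∃ t : ℕ, t ≤ n ∧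
      r = ⟨[], [chi (FLit.neg f) t, .pos (.u f t)], []⟩} ∪
  -- inertia axioms
  {r | ∃ f : F, ∃ t : ℕ, t < n ∧
      r = ⟨[chi (FLit.pos f) (t+1)], [chi (FLit.pos f) t],
           [chi (FLit.neg f) (t+1), .pos (.u f (t+1))]⟩} ∪
  {r | ∃ f : F, ∃ t : ℕ, t < n ∧
      r = ⟨[chi (FLit.neg f) (t+1)], [chi (FLit.neg f) t],
           [chi (FLit.pos f) (t+1), .pos (.u f (t+1))]⟩} ∪
  {r | ∃ f : F, ∃ t : ℕ, t < n ∧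
      r = ⟨[.pos (.u f (t+1))], [.pos (.u f t)],
           [chi (FLit.pos f) (t+1), chi (FLit.neg f) (t+1)]⟩}

/-- Facts `occurs(e,i)` and `split(f,i)` encoding a qualified action sequence. -/
def occSplitFacts {F E : Type} {n : ℕ} (s : QSeq F E n) : Set (Rule (PAtom F E)) :=
  {r | ∃ i : Fin n, ∃ e ∈ s.acts i, r = fact (.pos (.occurs e (i : ℕ)))} ∪
  {r | ∃ i : Fin n, ∃ f ∈ s.quals i, r = fact (.pos (.split f (i : ℕ)))}

/-- The program `Φⁿ(σ₀, s)`: the translation of `AD` plus the facts encoding the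
initial state `σ₀` and the qualified action sequence `s`. -/
def PhiProg {F E : Type} (AD : ActionDesc F E) {n : ℕ}
    (σ0 : Set (ELit F)) (s : QSeq F E n) : Set (Rule (PAtom F E)) :=
  CoreProg AD n ∪
  {r | ∃ l : FLit F, l.toE ∈ σ0 ∧ r = fact (chi l 0)} ∪
  {r | ∃ f : F, ELit.und f ∈ σ0 ∧ r = fact (.pos (.u f 0))} ∪
  occSplitFacts s

/-- The initial-state axioms `[g₁]`,`[g₂]`,`[g₃]` of the paper. -/
def InitAxioms (F E : Type) : Set (Rule (PAtom F E)) :=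
  {r | ∃ f : F, r = ⟨[chi (FLit.pos f) 0], [.pos (.init f)], []⟩} ∪
  {r | ∃ f : F, r = ⟨[chi (FLit.neg f) 0], [.neg (.init f)], []⟩} ∪
  {r | ∃ f : F, r = ⟨[chi (FLit.pos f) 0], [.pos (.forced f), .pos (.dflt f)],
        [.neg (.init f)]⟩} ∪
  {r | ∃ f : F, r = ⟨[chi (FLit.pos f) 0, chi (FLit.neg f) 0], [.pos (.forced f)],
        [.pos (.dflt f), .pos (.init f), .neg (.init f)]⟩} ∪
  {r | ∃ f : F, r = ⟨[chi (FLit.neg f) 0], [.pos (.dflt f)], [chi (FLit.pos f) 0]⟩} ∪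
  {r | ∃ f : F, r = ⟨[.pos (.u f 0)], [],
        [.pos (.dflt f), chi (FLit.pos f) 0, chi (FLit.neg f) 0]⟩}

/-- The program `Π_AD(I,F,s)`. -/
def PiProg {F E : Type} (D : Set F) (AD : ActionDesc F E) {n : ℕ}
    (I : Set (ELit F)) (Fs : Set F) (s : QSeq F E n) : Set (Rule (PAtom F E)) :=
  CoreProg AD n ∪ InitAxioms F E ∪
  {r | ∃ f : F, ELit.pos f ∈ I ∧ r = fact (.pos (.init f))} ∪
  {r | ∃ f : F, ELit.neg f ∈ I ∧ r = fact (.neg (.init f))} ∪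
  {r | ∃ f ∈ Fs, r = fact (.pos (.forced f))} ∪
  {r | ∃ f ∈ D, r = fact (.pos (.dflt f))} ∪
  occSplitFacts s

/-- The state at step `i` decoded from an answer set `A`:
`{l | χ(l,i) ∈ A} ∪ {u(f) | u(f,i) ∈ A}`. -/
def decodeState {F E : Type} (A : Set (ALit (PAtom F E))) (i : ℕ) : Set (ELit F) :=
  {l | (∃ fl : FLit F, l = fl.toE ∧ chi fl i ∈ A) ∨
       (∃ f : F, l = ELit.und f ∧ ALit.pos (.u f i) ∈ A)}

/-- An answer set `A` encodes the path `π`. -/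
def Encodes {F E : Type} {n : ℕ} (A : Set (ALit (PAtom F E))) (π : Path F E n) : Prop :=
  (∀ l : FLit F, ∀ i : Fin (n+1), l.toE ∈ π.states i ↔ chi l (i : ℕ) ∈ A) ∧
  (∀ f : F, ∀ i : Fin (n+1), ELit.und f ∈ π.states i ↔ ALit.pos (.u f (i : ℕ)) ∈ A) ∧
  (∀ e : E, ∀ i : Fin n, e ∈ π.acts i ↔ ALit.pos (.occurs e (i : ℕ)) ∈ A)

/-! ### The FindMatch algorithm -/

/-- Step (1) of FindMatch: `R`, the intersection of all answer sets of
`Π_AD(I, 𝓕∖𝓓, ℵ^×)`. -/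
def FMR {F E : Type} (D : Set F) (AD : ActionDesc F E) {n : ℕ}
    (I : Set (ELit F)) (ℵ : Fin n → Set E) : Set (ALit (PAtom F E)) :=
  ⋂₀ {A | IsAnswerSet (PiProg D AD I (Set.univ \ D) (qall ℵ)) A}

/-- Step (1) of FindMatch: the set
`I' = I ∪ {l | {χ(l,0), forced(f)} ⊆ R, l = f or l = ¬f}`. -/
def FMI' {F E : Type} (D : Set F) (AD : ActionDesc F E) {n : ℕ}
    (I : Set (ELit F)) (ℵ : Fin n → Set E) : Set (ELit F) :=
  I ∪ {l | ∃ f : F,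
        ((l = ELit.pos f ∧ chi (FLit.pos f) 0 ∈ FMR D AD I ℵ) ∨
         (l = ELit.neg f ∧ chi (FLit.neg f) 0 ∈ FMR D AD I ℵ)) ∧
        ALit.pos (.forced f) ∈ FMR D AD I ℵ}

/-- The set `X` computed at step (4a) of FindMatch from an answer set `A` and `I'`. -/
def FMX {F E : Type} (I' : Set (ELit F)) (A : Set (ALit (PAtom F E))) : Set (ELit F) :=
  {l | ∃ f : F, ((l = ELit.pos f ∧ chi (FLit.pos f) 0 ∈ A) ∨
                 (l = ELit.neg f ∧ chi (FLit.neg f) 0 ∈ A)) ∧ l ∉ I'}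

/-- The pair `(Fs, s)` succeeds at steps (4)-(4c) of FindMatch with answer set `A`:
`A` is an answer set of `Π_AD(I',Fs,s)` containing `χ(q,k+1)` or `χ(¬q,k+1)`, and
every answer set `B` of `Π_AD(X,∅,⟨⟩)` passes the test of step (4b). -/
def PairSucceeds {F E : Type} (D : Set F) (AD : ActionDesc F E) {n : ℕ}
    (I' : Set (ELit F)) (q : F) (Fs : Set F) (s : QSeq F E n)
    (A : Set (ALit (PAtom F E))) : Prop :=
  IsAnswerSet (PiProg D AD I' Fs s) A ∧
  (chi (FLit.pos q) n ∈ A ∨ chi (FLit.neg q) n ∈ A) ∧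
  ∀ B : Set (ALit (PAtom F E)),
    IsAnswerSet (PiProg D AD (FMX I' A) (∅ : Set F) (emptyQ : QSeq F E 0)) B →
    ((chi (FLit.pos q) 0 ∉ B ∧ chi (FLit.neg q) 0 ∉ B) ∨
     (chi (FLit.pos q) 0 ∈ B ∧ chi (FLit.neg q) n ∈ A) ∨
     (chi (FLit.neg q) 0 ∈ B ∧ chi (FLit.pos q) n ∈ A))

/-- The possible return values of FindMatch(I,ℵ,q) other than `⊥`: an answer set `A`
of some pair `(Fs,s)` (with `s` extending `ℵ`) that succeeds, where `|Fs| + Δ(s)` is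
minimal among all succeeding pairs, and `Π_AD(I,𝓕∖𝓓,ℵ^×)` has an answer set. -/
def FMResults {F E : Type} (D : Set F) (AD : ActionDesc F E) {n : ℕ}
    (I : Set (ELit F)) (ℵ : Fin n → Set E) (q : F) :
    Set (Set (ALit (PAtom F E))) :=
  {A | (∃ S, IsAnswerSet (PiProg D AD I (Set.univ \ D) (qall ℵ)) S) ∧
    ∃ (Fs : Set F) (s : QSeq F E n), s.Extends ℵ ∧
      PairSucceeds D AD (FMI' D AD I ℵ) q Fs s A ∧
      ∀ (Fs' : Set F) (s' : QSeq F E n), s'.Extends ℵ →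
        (∃ A', PairSucceeds D AD (FMI' D AD I ℵ) q Fs' s' A') →
        Fs.ncard + s.degree ≤ Fs'.ncard + s'.degree}

open Classical in
/-- The FindMatch algorithm: returns an answer set encoding a path if a match
exists, `⊥` (here `none`) otherwise. -/
noncomputable def FindMatch {F E : Type} (D : Set F) (AD : ActionDesc F E) {n : ℕ}
    (I : Set (ELit F)) (ℵ : Fin n → Set E) (q : F) :
    Option (Set (ALit (PAtom F E))) :=
  if h : (FMResults D AD I ℵ q).Nonempty then some h.choose else none

/-- An atom is formed by the relations `forced` or `split`. -/
def isFS {F E : Type} : PAtom F E → Prop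
  | .forced _ => True
  | .split _ _ => True
  | _ => False

/-- `‖A‖`: the number of atoms of `A` formed by `forced` and `split`; `‖⊥‖ = ∞`. -/
noncomputable def normOpt {F E : Type} :
    Option (Set (ALit (PAtom F E))) → ℕ∞
  | none => ⊤
  | some A => (({x ∈ A | isFS x.atom}).ncard : ℕ∞)

end ACIR

namespace ACIR

/-!
Take for `q₀` the branching set of the transition (the fluents made unknown by `a₀` that
nevertheless get a definite value in `σ₁`) and for `A` the literals of `σ₀` at time 0 and of
`σ₁` at time 1, together with `occurs(e,0)` for `e ∈ a₀` and `split(f,0)` for `f ∈ q₀`.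
Since `σ₀`, `σ₁` are states and `a₀` is executable, `A` is closed under the reduct. If
`T ⊆ A` is closed under the reduct, it contains all facts; its time-1 part then contains the
set `W ∈ 𝔼(a₀,σ₀)` of the transition (through the dynamic laws, the split atoms selecting
which of the two rules for `u(f)` applies) and `σ₀ ∩ σ₁` (through inertia, whose negative
bodies are false by consistency of `σ₁`), and it is closed under the state constraints, so it
contains `Cn_Z(W ∪ (σ₀ ∩ σ₁)) = σ₁`. Hence `T = A`.
-/

section AnswerSets

variable {A : Type} {P : Set (Rule A)} {S T : Set (ALit A)}

/-- Closedness of `T` under the reduct `P^S`, phrased on the rules of `P`. -/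
def ClosedUnderReduct (P : Set (Rule A)) (S T : Set (ALit A)) : Prop :=
  ∀ r ∈ P, (∀ l ∈ r.bodyN, l ∉ S) → (∀ l ∈ r.bodyP, l ∈ T) → ∃ h ∈ r.head, h ∈ T

lemma ClosedUnderReduct.closedRule (hT : ClosedUnderReduct P S T) :
    ∀ r ∈ Reduct P S, ClosedRule r T := by
  rintro _ ⟨r, hr, hN, rfl⟩ ⟨hP, -⟩
  exact hT r hr hN hP

lemma closedUnderReduct_of_closedRule (hT : ∀ r ∈ Reduct P S, ClosedRule r T) :
    ClosedUnderReduct P S T :=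
  fun r hr hN hP => hT ⟨r.head, r.bodyP, []⟩ ⟨r, hr, hN, rfl⟩ ⟨hP, nofun⟩

lemma ClosedUnderReduct.union {Q : Set (Rule A)} (hP : ClosedUnderReduct P S T)
    (hQ : ClosedUnderReduct Q S T) : ClosedUnderReduct (P ∪ Q) S T
  | r, .inl hr => hP r hr
  | r, .inr hr => hQ r hr

lemma closedUnderReduct_of_facts {Q : Set (Rule A)} (hQ : ∀ r ∈ Q, ∃ l ∈ T, r = fact l) :
    ClosedUnderReduct Q S T := by
  intro r hr _ _
  obtain ⟨l, hl, rfl⟩ := hQ r hr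
  exact ⟨l, List.mem_singleton_self l, hl⟩

lemma ClosedUnderReduct.head_mem (hT : ClosedUnderReduct P S T) {h : ALit A}
    {bodyP bodyN : List (ALit A)} (hr : ⟨[h], bodyP, bodyN⟩ ∈ P)
    (hN : ∀ l ∈ bodyN, l ∉ S) (hP : ∀ l ∈ bodyP, l ∈ T) : h ∈ T := by
  simpa using hT _ hr hN hP

lemma isAnswerSet_of_minimal (hS : AConsistent S) (hclosed : ClosedUnderReduct P S S)
    (hmin : ∀ T ⊆ S, ClosedUnderReduct P S T → S ⊆ T) : IsAnswerSet P S :=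
  ⟨hS, hclosed.closedRule, fun _ _ hT hTS =>
    hTS.antisymm (hmin _ hTS (closedUnderReduct_of_closedRule hT))⟩

end AnswerSets

section Literals

variable {F E : Type}

/-- The ASP literal `χ(l,t)`, resp. `u(f,t)`, representing the extended literal `l` at
time `t`. -/
def ELit.toALit : ELit F → ℕ → ALit (PAtom F E)
  | .pos f, t => .pos (.holds f t)
  | .neg f, t => .neg (.holds f t)
  | .und f, t => .pos (.u f t)

lemma chi_eq_toALit (l : FLit F) (t : ℕ) : (chi l t : ALit (PAtom F E)) = l.toE.toALit t := by
  cases l <;> rfl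

lemma ELit.toALit_inj {l l' : ELit F} {t t' : ℕ} :
    (l.toALit t : ALit (PAtom F E)) = l'.toALit t' ↔ l = l' ∧ t = t' := by
  cases l <;> cases l' <;> simp [ELit.toALit]

lemma mem_decodeState {A : Set (ALit (PAtom F E))} {l : ELit F} {t : ℕ} :
    l ∈ decodeState A t ↔ l.toALit t ∈ A := by
  constructor
  · rintro (⟨fl, rfl, h⟩ | ⟨f, rfl, h⟩)
    · rwa [← chi_eq_toALit]
    · exact h
  · intro h
    cases l with
    | pos f => exact Or.inl ⟨.pos f, rfl, h⟩
    | neg f => exact Or.inl ⟨.neg f, rfl, h⟩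
    | und f => exact Or.inr ⟨f, rfl, h⟩

lemma decodeState_mono {A B : Set (ALit (PAtom F E))} (h : A ⊆ B) (t : ℕ) :
    decodeState A t ⊆ decodeState B t :=
  fun _ hl => mem_decodeState.mpr (h (mem_decodeState.mp hl))

lemma ConsistentE.eq_of_fluent_eq {S : Set (ELit F)} (hS : ConsistentE S) {l l' : ELit F}
    (hl : l ∈ S) (hl' : l' ∈ S) (h : l.fluent = l'.fluent) : l = l' := by
  rcases l with f | f | f <;> rcases l' with g | g | g <;> simp only [ELit.fluent] at h <;>
    subst h <;> have := hS f <;> tauto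

lemma exists_flit_of_isLit {l : ELit F} (hl : l.isLit) : ∃ fl : FLit F, l = fl.toE := by
  cases l with
  | pos f => exact ⟨.pos f, rfl⟩
  | neg f => exact ⟨.neg f, rfl⟩
  | und f => exact hl.elim

end Literals

section Transitions

variable {F E : Type} {AD : ActionDesc F E} {a : Set E} {σ : Set (ELit F)}

lemma subset_Cn (Z : Set (StateConstraint F)) (S : Set (ELit F)) : S ⊆ Cn Z S :=
  fun _ hl _ hT => hT.1 hl

lemma Cn_subset {Z : Set (StateConstraint F)} {S T : Set (ELit F)} (hST : S ⊆ T)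
    (hT : ∀ c ∈ Z, ClosedUnderSC c T) : Cn Z S ⊆ T :=
  fun _ hl => hl T ⟨hST, hT⟩

lemma mem_expansion_of_isLit {W : Set (ELit F)} (hW : W ∈ expansion AD a σ) {l : ELit F}
    (hl : l ∈ directEff AD a σ) (hlit : l.isLit) : l ∈ W := by
  obtain ⟨c, -, rfl⟩ := hW
  exact Or.inl ⟨hl, hlit⟩

lemma isLit_or_und_fluent_mem_of_mem_expansion {W : Set (ELit F)}
    (hW : W ∈ expansion AD a σ) {l : ELit F} (hl : l ∈ W) :
    (l ∈ directEff AD a σ ∧ l.isLit) ∨ ELit.und l.fluent ∈ directEff AD a σ := by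
  obtain ⟨c, hc, rfl⟩ := hW
  rcases hl with hl | ⟨f, hf, rfl⟩
  · exact Or.inl hl
  · right
    rcases hc f hf with h | h | h <;> rwa [h]

end Transitions

section Encoding

variable {F E : Type} {AD : ActionDesc F E} {σ0 σ1 : Set (ELit F)} {a0 : Set E}

abbrev transitionProgram (AD : ActionDesc F E) (σ0 : Set (ELit F)) (a0 : Set E)
    (σ1 : Set (ELit F)) : Set (Rule (PAtom F E)) :=
  PhiProg AD σ0 (⟨fun _ => a0, fun _ => branchSet AD σ0 a0 σ1⟩ : QSeq F E 1)

def transitionEncoding (AD : ActionDesc F E) (σ0 : Set (ELit F)) (a0 : Set E)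
    (σ1 : Set (ELit F)) : Set (ALit (PAtom F E)) :=
  {x | ∃ l ∈ σ0, x = l.toALit 0} ∪ {x | ∃ l ∈ σ1, x = l.toALit 1} ∪
    {x | ∃ e ∈ a0, x = .pos (.occurs e 0)} ∪
    {x | ∃ f ∈ branchSet AD σ0 a0 σ1, x = .pos (.split f 0)}

@[simp] lemma toALit_mem_transitionEncoding {l : ELit F} {t : ℕ} :
    l.toALit t ∈ transitionEncoding AD σ0 a0 σ1 ↔ t = 0 ∧ l ∈ σ0 ∨ t = 1 ∧ l ∈ σ1 := by
  have hocc : ∀ (e : E) t', l.toALit t ≠ .pos (.occurs e t') := by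
    cases l <;> simp [ELit.toALit]
  have hsplit : ∀ (f : F) t', (l.toALit t : ALit (PAtom F E)) ≠ .pos (.split f t') := by
    cases l <;> simp [ELit.toALit]
  simp only [transitionEncoding, Set.mem_union, Set.mem_ofPred_eq, ELit.toALit_inj]
  aesop

@[simp] lemma occurs_mem_transitionEncoding {e : E} {t : ℕ} :
    .pos (.occurs e t) ∈ transitionEncoding AD σ0 a0 σ1 ↔ t = 0 ∧ e ∈ a0 := by
  have hlit : ∀ (l : ELit F) t', .pos (.occurs e t) ≠ l.toALit t' := by
    intro l; cases l <;> simp [ELit.toALit]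
  simp only [transitionEncoding, Set.mem_union, Set.mem_ofPred_eq]
  aesop

@[simp] lemma split_mem_transitionEncoding {f : F} {t : ℕ} :
    .pos (.split f t) ∈ transitionEncoding AD σ0 a0 σ1 ↔
      t = 0 ∧ f ∈ branchSet AD σ0 a0 σ1 := by
  have hlit : ∀ (l : ELit F) t', (.pos (.split f t) : ALit (PAtom F E)) ≠ l.toALit t' := by
    intro l; cases l <;> simp [ELit.toALit]
  simp only [transitionEncoding, Set.mem_union, Set.mem_ofPred_eq]
  aesop

@[simp] lemma pos_u_eq_toALit (f : F) (t : ℕ) :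
    (ALit.pos (.u f t) : ALit (PAtom F E)) = (ELit.und f).toALit t :=
  rfl

lemma decodeState_transitionEncoding_zero :
    decodeState (transitionEncoding AD σ0 a0 σ1) 0 = σ0 := by
  ext l
  simp [mem_decodeState]

lemma decodeState_transitionEncoding_one :
    decodeState (transitionEncoding AD σ0 a0 σ1) 1 = σ1 := by
  ext l
  simp [mem_decodeState]

lemma isState_decodeState_transitionEncoding (h0 : IsState AD σ0) (h1 : IsState AD σ1)
    {t : ℕ} (ht : t ≤ 1) : IsState AD (decodeState (transitionEncoding AD σ0 a0 σ1) t) := by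
  rcases Nat.le_one_iff_eq_zero_or_eq_one.mp ht with rfl | rfl
  · rwa [decodeState_transitionEncoding_zero]
  · rwa [decodeState_transitionEncoding_one]

lemma forall_mem_dynamicBody_transitionEncoding_iff {e : E} {cond : List (FLit F)} :
    (∀ x ∈ .pos (.occurs e 0) :: cond.map (chi · 0), x ∈ transitionEncoding AD σ0 a0 σ1) ↔
      e ∈ a0 ∧ ∀ b ∈ cond, b.toE ∈ σ0 := by
  simp [chi_eq_toALit]

lemma transitionEncoding_consistent (h0 : ConsistentE σ0) (h1 : ConsistentE σ1) :
    AConsistent (transitionEncoding AD σ0 a0 σ1) := by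
  rintro p ⟨hpos, hneg⟩
  cases p with
  | holds f t =>
    rw [show ALit.pos (PAtom.holds f t) = (ELit.pos f).toALit (E := E) t from rfl,
      toALit_mem_transitionEncoding] at hpos
    rw [show ALit.neg (PAtom.holds f t) = (ELit.neg f).toALit (E := E) t from rfl,
      toALit_mem_transitionEncoding] at hneg
    rcases hpos with ⟨rfl, hp⟩ | ⟨rfl, hp⟩ <;> rcases hneg with ⟨ht, hn⟩ | ⟨ht, hn⟩
    · exact (h0 f).1 ⟨hp, hn⟩
    · exact absurd ht zero_ne_one
    · exact absurd ht one_ne_zero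
    · exact (h1 f).1 ⟨hp, hn⟩
  | _ =>
    simp only [transitionEncoding, Set.mem_union, Set.mem_ofPred_eq] at hneg
    rcases hneg with ((⟨l, -, hl⟩ | ⟨l, -, hl⟩) | ⟨_, -, hl⟩) | ⟨_, -, hl⟩ <;>
      first | cases hl | cases l <;> cases hl

end Encoding

section ProgramRules

variable {F E : Type} {AD : ActionDesc F E} {σ0 : Set (ELit F)} {n : ℕ} {s : QSeq F E n}
  {S T : Set (ALit (PAtom F E))}

lemma mem_phiProg_of_mem_coreProg {r : Rule (PAtom F E)} (hr : r ∈ CoreProg AD n) :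
    r ∈ PhiProg AD σ0 s :=
  Or.inl (Or.inl (Or.inl hr))

lemma ClosedUnderReduct.toALit_zero_mem (hT : ClosedUnderReduct (PhiProg AD σ0 s) S T)
    {l : ELit F} (hl : l ∈ σ0) : l.toALit 0 ∈ T := by
  cases l with
  | pos f => exact hT.head_mem (Or.inl (Or.inl (Or.inr ⟨.pos f, hl, rfl⟩))) nofun nofun
  | neg f => exact hT.head_mem (Or.inl (Or.inl (Or.inr ⟨.neg f, hl, rfl⟩))) nofun nofun
  | und f => exact hT.head_mem (Or.inl (Or.inr ⟨f, hl, rfl⟩)) nofun nofun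

lemma ClosedUnderReduct.occurs_mem (hT : ClosedUnderReduct (PhiProg AD σ0 s) S T) {i : Fin n}
    {e : E} (he : e ∈ s.acts i) : .pos (.occurs e i) ∈ T :=
  hT.head_mem (Or.inr (Or.inl ⟨i, e, he, rfl⟩)) nofun nofun

lemma ClosedUnderReduct.split_mem (hT : ClosedUnderReduct (PhiProg AD σ0 s) S T) {i : Fin n}
    {f : F} (hf : f ∈ s.quals i) : .pos (.split f i) ∈ T :=
  hT.head_mem (Or.inr (Or.inr ⟨i, f, hf, rfl⟩)) nofun nofun

lemma ClosedUnderReduct.chi_succ_mem_of_dynamicLaw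
    (hT : ClosedUnderReduct (PhiProg AD σ0 s) S T) {d : DynamicLaw F E} (hd : d ∈ AD.dyn)
    {l : FLit F} (hl : d.eff = l.toE) {t : ℕ} (ht : t < n) (hocc : .pos (.occurs d.act t) ∈ T)
    (hcond : ∀ b ∈ d.cond, chi b t ∈ T) : chi l (t + 1) ∈ T :=
  hT.head_mem (mem_phiProg_of_mem_coreProg (Or.inl (Or.inl (Or.inl (Or.inl (Or.inl (Or.inl
    (Or.inl (Or.inl (Or.inl ⟨d, hd, t, ht, l, hl, rfl⟩)))))))))) nofun
    (List.forall_mem_cons.mpr ⟨hocc, List.forall_mem_map.mpr hcond⟩)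

lemma ClosedUnderReduct.u_succ_mem_of_dynamicLaw
    (hT : ClosedUnderReduct (PhiProg AD σ0 s) S T) {d : DynamicLaw F E} (hd : d ∈ AD.dyn)
    {f : F} (hf : d.eff = .und f) {t : ℕ} (ht : t < n) (hocc : .pos (.occurs d.act t) ∈ T)
    (hcond : ∀ b ∈ d.cond, chi b t ∈ T) (hsplit : .pos (.split f t) ∉ S) :
    .pos (.u f (t + 1)) ∈ T :=
  hT.head_mem (mem_phiProg_of_mem_coreProg (Or.inl (Or.inl (Or.inl (Or.inl (Or.inl (Or.inl
    (Or.inl (Or.inl (Or.inr ⟨d, hd, t, ht, f, hf, rfl⟩))))))))))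
    (List.forall_mem_singleton.mpr hsplit)
    (List.forall_mem_cons.mpr ⟨hocc, List.forall_mem_map.mpr hcond⟩)

lemma ClosedUnderReduct.chi_succ_mem_of_split
    (hT : ClosedUnderReduct (PhiProg AD σ0 s) S T) {d : DynamicLaw F E} (hd : d ∈ AD.dyn)
    {f : F} (hf : d.eff = .und f) {t : ℕ} (ht : t < n) (hocc : .pos (.occurs d.act t) ∈ T)
    (hcond : ∀ b ∈ d.cond, chi b t ∈ T) (hsplit : .pos (.split f t) ∈ T) :
    chi (.pos f) (t + 1) ∈ T ∨ chi (.neg f) (t + 1) ∈ T := by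
  obtain ⟨h, hh, hT⟩ := hT _ (mem_phiProg_of_mem_coreProg (Or.inl (Or.inl (Or.inl (Or.inl
    (Or.inl (Or.inl (Or.inl (Or.inr ⟨d, hd, t, ht, f, hf, rfl⟩))))))))) nofun
    (List.forall_mem_cons.mpr ⟨hocc, List.forall_mem_cons.mpr
      ⟨hsplit, List.forall_mem_map.mpr hcond⟩⟩)
  rcases List.mem_pair.mp hh with rfl | rfl
  exacts [Or.inl hT, Or.inr hT]

lemma ClosedUnderReduct.closedUnderSC_decodeState
    (hT : ClosedUnderReduct (PhiProg AD σ0 s) S T) {t : ℕ} (ht : t ≤ n) :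
    ∀ c ∈ AD.sc, ClosedUnderSC c (decodeState T t) := by
  intro c hc hbody
  rw [mem_decodeState, ← chi_eq_toALit]
  refine hT.head_mem (mem_phiProg_of_mem_coreProg (Or.inl (Or.inl (Or.inl (Or.inl (Or.inl
    (Or.inl (Or.inr ⟨c, hc, t, ht, rfl⟩)))))))) nofun (List.forall_mem_map.mpr fun b hb => ?_)
  rw [chi_eq_toALit, ← mem_decodeState]
  exact hbody b hb

lemma ClosedUnderReduct.toALit_succ_mem_of_inertia
    (hT : ClosedUnderReduct (PhiProg AD σ0 s) S T) {l : ELit F} {t : ℕ} (ht : t < n)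
    (hl : l.toALit t ∈ T) (hother : ∀ l' : ELit F, l'.fluent = l.fluent → l' ≠ l →
      l'.toALit (t + 1) ∉ S) : l.toALit (t + 1) ∈ T := by
  cases l with
  | pos f =>
    exact hT.head_mem (mem_phiProg_of_mem_coreProg (Or.inl (Or.inl (Or.inr ⟨f, t, ht, rfl⟩))))
      (List.forall_mem_cons.mpr ⟨hother (.neg f) rfl nofun,
        List.forall_mem_singleton.mpr (hother (.und f) rfl nofun)⟩)
      (List.forall_mem_singleton.mpr hl)
  | neg f =>
    exact hT.head_mem (mem_phiProg_of_mem_coreProg (Or.inl (Or.inr ⟨f, t, ht, rfl⟩)))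
      (List.forall_mem_cons.mpr ⟨hother (.pos f) rfl nofun,
        List.forall_mem_singleton.mpr (hother (.und f) rfl nofun)⟩)
      (List.forall_mem_singleton.mpr hl)
  | und f =>
    exact hT.head_mem (mem_phiProg_of_mem_coreProg (Or.inr ⟨f, t, ht, rfl⟩))
      (List.forall_mem_cons.mpr ⟨hother (.pos f) rfl nofun,
        List.forall_mem_singleton.mpr (hother (.neg f) rfl nofun)⟩)
      (List.forall_mem_singleton.mpr hl)

end ProgramRules

section Program

variable {F E : Type} {AD : ActionDesc F E} {σ0 σ1 : Set (ELit F)} {a0 : Set E}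

lemma closedUnderReduct_coreProg_transitionEncoding (h0 : IsState AD σ0) (h1 : IsState AD σ1)
    (hex : Executable AD a0 σ0) (heff : ∀ l ∈ directEff AD a0 σ0, l.isLit → l ∈ σ1) :
    ClosedUnderReduct (CoreProg AD 1) (transitionEncoding AD σ0 a0 σ1)
      (transitionEncoding AD σ0 a0 σ1) := by
  set A := transitionEncoding AD σ0 a0 σ1
  have hstate : ∀ {t}, t ≤ 1 → IsState AD (decodeState A t) :=
    isState_decodeState_transitionEncoding h0 h1
  intro r hr hN hP
  rcases hr with ((((((((⟨d, hd, t, ht, l, hl, rfl⟩ | ⟨d, hd, t, ht, f, hf, rfl⟩) |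
    ⟨d, hd, t, ht, f, hf, rfl⟩) | ⟨c, hc, t, ht, rfl⟩) | ⟨ec, hec, t, ht, rfl⟩) |
    ⟨f, t, ht, rfl⟩) | ⟨f, t, ht, rfl⟩) | ⟨f, t, ht, rfl⟩) | ⟨f, t, ht, rfl⟩) | ⟨f, t, ht, rfl⟩
  · obtain rfl := Nat.lt_one_iff.mp ht
    obtain ⟨hact, hcond⟩ := forall_mem_dynamicBody_transitionEncoding_iff.mp hP
    have := heff _ ⟨d, hd, hact, hcond, hl.symm⟩ (by cases l <;> trivial)
    exact ⟨_, List.mem_singleton_self _, by simpa [A, chi_eq_toALit] using this⟩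
  · obtain rfl := Nat.lt_one_iff.mp ht
    obtain ⟨hact, hcond⟩ := forall_mem_dynamicBody_transitionEncoding_iff.mp hP
    have hsplit : f ∉ branchSet AD σ0 a0 σ1 := by simpa [A] using hN
    have : ELit.und f ∈ σ1 := by
      by_contra hu
      exact hsplit ⟨⟨d, hd, hact, hcond, hf.symm⟩, hu⟩
    exact ⟨_, List.mem_singleton_self _, by simpa [A] using this⟩
  · obtain rfl := Nat.lt_one_iff.mp ht
    have hsplit : f ∈ branchSet AD σ0 a0 σ1 := by
      simpa [A] using hP (.pos (.split f 0)) (by simp)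
    rcases h1.1 f with hf1 | hf1 | hf1
    · exact ⟨_, List.mem_cons_self, by simpa [A, chi_eq_toALit, FLit.toE] using hf1⟩
    · exact ⟨_, List.mem_cons_of_mem _ List.mem_cons_self,
        by simpa [A, chi_eq_toALit, FLit.toE] using hf1⟩
    · exact absurd hf1 hsplit.2
  · have hbody : ∀ b ∈ c.body, b.toE ∈ decodeState A t := fun b hb =>
      mem_decodeState.mpr (by simpa [chi_eq_toALit] using hP _ (List.mem_map_of_mem hb))
    exact ⟨_, List.mem_singleton_self _, by
      simpa [chi_eq_toALit, mem_decodeState] using (hstate ht).2.2 c hc hbody⟩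
  · obtain rfl := Nat.lt_one_iff.mp ht
    exact (hex ⟨ec, hec, forall_mem_dynamicBody_transitionEncoding_iff.mp hP⟩).elim
  · have h := (hstate ht).2.1 f
    simp only [mem_decodeState] at h
    exact absurd ⟨hP _ List.mem_cons_self, hP _ (List.mem_cons_of_mem _ List.mem_cons_self)⟩
      h.2.1
  · have h := (hstate ht).2.1 f
    simp only [mem_decodeState] at h
    exact absurd ⟨hP _ List.mem_cons_self, hP _ (List.mem_cons_of_mem _ List.mem_cons_self)⟩
      h.2.2
  all_goals
    obtain rfl := Nat.lt_one_iff.mp ht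
    have := h1.1 f
    simp only [A, zero_add, chi_eq_toALit, FLit.toE, pos_u_eq_toALit, List.mem_cons,
      List.not_mem_nil, or_false, forall_eq_or_imp, forall_eq, toALit_mem_transitionEncoding,
      one_ne_zero, false_and, true_and, false_or, exists_eq_left] at hN ⊢
    tauto

lemma closedUnderReduct_phiProg_transitionEncoding (h0 : IsState AD σ0) (h1 : IsState AD σ1)
    (hex : Executable AD a0 σ0) (heff : ∀ l ∈ directEff AD a0 σ0, l.isLit → l ∈ σ1) :
    ClosedUnderReduct (transitionProgram AD σ0 a0 σ1) (transitionEncoding AD σ0 a0 σ1)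
      (transitionEncoding AD σ0 a0 σ1) := by
  refine (((closedUnderReduct_coreProg_transitionEncoding h0 h1 hex heff).union
    (closedUnderReduct_of_facts ?_)).union (closedUnderReduct_of_facts ?_)).union
    (closedUnderReduct_of_facts ?_)
  · rintro _ ⟨l, hl, rfl⟩
    exact ⟨_, by simpa [chi_eq_toALit] using hl, rfl⟩
  · rintro _ ⟨f, hf, rfl⟩
    exact ⟨_, by simpa using hf, rfl⟩
  · rintro _ (⟨i, e, he, rfl⟩ | ⟨i, f, hf, rfl⟩)
    · exact ⟨_, by simpa using he, rfl⟩
    · exact ⟨_, by simpa using hf, rfl⟩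

end Program

section Minimality

variable {F E : Type} {AD : ActionDesc F E} {σ0 σ1 : Set (ELit F)} {a0 : Set E}
  {T : Set (ALit (PAtom F E))}

lemma ClosedUnderReduct.dynamicBody_mem
    (hT : ClosedUnderReduct (transitionProgram AD σ0 a0 σ1) (transitionEncoding AD σ0 a0 σ1) T)
    {e : E} (he : e ∈ a0) {cond : List (FLit F)} (hcond : ∀ b ∈ cond, b.toE ∈ σ0) :
    .pos (.occurs e 0) ∈ T ∧ ∀ b ∈ cond, chi b 0 ∈ T :=
  ⟨hT.occurs_mem (i := 0) he, fun b hb => by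
    rw [chi_eq_toALit]
    exact hT.toALit_zero_mem (hcond b hb)⟩

lemma ClosedUnderReduct.exists_fluent_mem_decodeState_of_und_mem_directEff
    (hT : ClosedUnderReduct (transitionProgram AD σ0 a0 σ1) (transitionEncoding AD σ0 a0 σ1) T)
    {f : F} (hf : ELit.und f ∈ directEff AD a0 σ0) :
    ∃ l ∈ decodeState T 1, l.fluent = f := by
  obtain ⟨d, hd, hact, hcond, hdf⟩ := hf
  obtain ⟨hocc, hcondT⟩ := hT.dynamicBody_mem hact hcond
  by_cases hu : ELit.und f ∈ σ1
  · refine ⟨.und f, mem_decodeState.mpr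
      (hT.u_succ_mem_of_dynamicLaw hd hdf.symm zero_lt_one hocc hcondT ?_), rfl⟩
    simpa using fun h : f ∈ branchSet AD σ0 a0 σ1 => h.2 hu
  · have hsplit : f ∈ branchSet AD σ0 a0 σ1 := ⟨⟨d, hd, hact, hcond, hdf⟩, hu⟩
    rcases hT.chi_succ_mem_of_split hd hdf.symm zero_lt_one hocc hcondT
      (hT.split_mem (i := 0) hsplit) with h | h
    exacts [⟨.pos f, mem_decodeState.mpr h, rfl⟩, ⟨.neg f, mem_decodeState.mpr h, rfl⟩]

lemma ClosedUnderReduct.subset_decodeState_one (h1 : ConsistentE σ1) {W : Set (ELit F)}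
    (hW : W ∈ expansion AD a0 σ0) (hσ1 : σ1 = Cn AD.sc (W ∪ (σ0 ∩ σ1)))
    (hTA : T ⊆ transitionEncoding AD σ0 a0 σ1)
    (hT : ClosedUnderReduct (transitionProgram AD σ0 a0 σ1) (transitionEncoding AD σ0 a0 σ1) T) :
    σ1 ⊆ decodeState T 1 := by
  have hTσ1 : decodeState T 1 ⊆ σ1 := by
    simpa only [decodeState_transitionEncoding_one] using decodeState_mono hTA 1
  have hW1 : W ⊆ σ1 := hσ1 ▸ Set.subset_union_left.trans (subset_Cn _ _)
  have hWT : W ⊆ decodeState T 1 := by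
    intro l hl
    rcases isLit_or_und_fluent_mem_of_mem_expansion hW hl with
      ⟨⟨d, hd, hact, hcond, rfl⟩, hlit⟩ | hund
    · obtain ⟨fl, hfl⟩ := exists_flit_of_isLit hlit
      obtain ⟨hocc, hcondT⟩ := hT.dynamicBody_mem hact hcond
      rw [hfl, mem_decodeState, ← chi_eq_toALit]
      exact hT.chi_succ_mem_of_dynamicLaw hd hfl zero_lt_one hocc hcondT
    · obtain ⟨l', hl', hfl'⟩ := hT.exists_fluent_mem_decodeState_of_und_mem_directEff hund
      exact h1.eq_of_fluent_eq (hTσ1 hl') (hW1 hl) hfl' ▸ hl'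
  have hinertia : σ0 ∩ σ1 ⊆ decodeState T 1 := by
    rintro l ⟨hl0, hl1⟩
    refine mem_decodeState.mpr
      (hT.toALit_succ_mem_of_inertia zero_lt_one (hT.toALit_zero_mem hl0) ?_)
    intro l' hfl hne hl'
    exact hne (h1.eq_of_fluent_eq (by simpa using hl') hl1 hfl)
  exact hσ1.trans_subset
    (Cn_subset (Set.union_subset hWT hinertia) (hT.closedUnderSC_decodeState le_rfl))

lemma ClosedUnderReduct.transitionEncoding_subset (h1 : ConsistentE σ1) {W : Set (ELit F)}
    (hW : W ∈ expansion AD a0 σ0) (hσ1 : σ1 = Cn AD.sc (W ∪ (σ0 ∩ σ1)))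
    (hTA : T ⊆ transitionEncoding AD σ0 a0 σ1)
    (hT : ClosedUnderReduct (transitionProgram AD σ0 a0 σ1) (transitionEncoding AD σ0 a0 σ1) T) :
    transitionEncoding AD σ0 a0 σ1 ⊆ T := by
  rintro x (((⟨l, hl, rfl⟩ | ⟨l, hl, rfl⟩) | ⟨e, he, rfl⟩) | ⟨f, hf, rfl⟩)
  · exact hT.toALit_zero_mem hl
  · exact mem_decodeState.mp (hT.subset_decodeState_one h1 hW hσ1 hTA hl)
  · exact hT.occurs_mem (i := 0) he
  · exact hT.split_mem (i := 0) hf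

end Minimality

theorem stmt5_general {F E : Type} (AD : ActionDesc F E)
    (σ0 : Set (ELit F)) (a0 : Set E) (σ1 : Set (ELit F))
    (h : IsTransition AD σ0 a0 σ1) :
    ∃ (q0 : Set F) (A : Set (ALit (PAtom F E))),
      IsAnswerSet (PhiProg AD σ0 (⟨fun _ => a0, fun _ => q0⟩ : QSeq F E 1)) A ∧
      σ1 = decodeState A 1 := by
  obtain ⟨h0, h1, hex, W, hW, hσ1⟩ := h
  have heff : ∀ l ∈ directEff AD a0 σ0, l.isLit → l ∈ σ1 := fun l hl hlit =>
    hσ1 ▸ subset_Cn _ _ (Or.inl (mem_expansion_of_isLit hW hl hlit))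
  refine ⟨branchSet AD σ0 a0 σ1, transitionEncoding AD σ0 a0 σ1,
    isAnswerSet_of_minimal (transitionEncoding_consistent h0.2.1 h1.2.1)
      (closedUnderReduct_phiProg_transitionEncoding h0 h1 hex heff)
      fun T hTA hT => hT.transitionEncoding_subset h1.2.1 hW hσ1 hTA,
    decodeState_transitionEncoding_one.symm⟩

/-- Every transition `⟨σ₀,a₀,σ₁⟩` of `τ(AD)` is captured by some
answer set of `Φ¹(σ₀,a₀,q₀)` for some qualifier `q₀`. -/
theorem stmt5 {F E : Type} [Fintype F] (AD : ActionDesc F E)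
    (σ0 : Set (ELit F)) (a0 : Set E) (σ1 : Set (ELit F))
    (h : IsTransition AD σ0 a0 σ1) :
    ∃ (q0 : Set F) (A : Set (ALit (PAtom F E))),
      IsAnswerSet (PhiProg AD σ0 (⟨fun _ => a0, fun _ => q0⟩ : QSeq F E 1)) A ∧
      σ1 = decodeState A 1 :=
  stmt5_general AD σ0 a0 σ1 h

end ACIR
end

section
/- Let AD be an action description of AL_IR, I a consistent set of fluent literals, and F a set of fluents. Every element of the completion γ(I,F) is a state of the transition diagram τ(AD), i.e., a complete and consistent set of extended literals closed under the state constraints of AD. -/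
namespace ACIR

section

variable {F : Type}

theorem closedUnderSC_Cn (Z : Set (StateConstraint F)) (S : Set (ELit F)) {c : StateConstraint F}
    (hc : c ∈ Z) : ClosedUnderSC c (Cn Z S) :=
  fun hbody T hT => hT.2 c hc fun l hl => Set.mem_sInter.mp (hbody l hl) T hT

def addUnknowns (S : Set (ELit F)) : Set (ELit F) :=
  S ∪ {l | ∃ f : F, ¬ fOccurs f S ∧ l = ELit.und f}

theorem gamma_eq_addUnknowns {E : Type} (D : Set F) (AD : ActionDesc F E) (I : Set (ELit F)) :
    gamma D AD I = addUnknowns (gammaBase D AD I) :=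
  rfl

section addUnknowns

variable {S : Set (ELit F)}

theorem FLit.toE_mem_addUnknowns {l : FLit F} : l.toE ∈ addUnknowns S ↔ l.toE ∈ S := by
  refine ⟨?_, Or.inl⟩
  rintro (h | ⟨f, -, heq⟩)
  · exact h
  · cases l <;> cases heq

theorem und_mem_addUnknowns {f : F} :
    ELit.und f ∈ addUnknowns S ↔ ELit.und f ∈ S ∨ ¬ fOccurs f S := by
  refine ⟨?_, ?_⟩
  · rintro (h | ⟨f', hf', heq⟩)
    · exact Or.inl h
    · cases heq
      exact Or.inr hf'
  · rintro (h | h)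
    · exact Or.inl h
    · exact Or.inr ⟨f, h, rfl⟩

theorem completeE_addUnknowns (S : Set (ELit F)) : CompleteE (addUnknowns S) := by
  intro f
  by_cases h : fOccurs f S
  · obtain ⟨l, hl, rfl⟩ := h
    cases l with
    | pos g => exact Or.inl (Or.inl hl)
    | neg g => exact Or.inr (Or.inl (Or.inl hl))
    | und g => exact Or.inr (Or.inr (Or.inl hl))
  · exact Or.inr (Or.inr (und_mem_addUnknowns.2 (Or.inr h)))

theorem consistentE_addUnknowns (hS : ConsistentE S) : ConsistentE (addUnknowns S) := by
  intro f
  have hpos : ELit.pos f ∈ addUnknowns S ↔ ELit.pos f ∈ S :=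
    FLit.toE_mem_addUnknowns (l := .pos f)
  have hneg : ELit.neg f ∈ addUnknowns S ↔ ELit.neg f ∈ S :=
    FLit.toE_mem_addUnknowns (l := .neg f)
  obtain ⟨hpn, hpu, hnu⟩ := hS f
  refine ⟨?_, ?_, ?_⟩
  · rintro ⟨hp, hn⟩
    exact hpn ⟨hpos.1 hp, hneg.1 hn⟩
  · rintro ⟨hp, hu⟩
    rcases und_mem_addUnknowns.1 hu with hu | hocc
    · exact hpu ⟨hpos.1 hp, hu⟩
    · exact hocc ⟨_, hpos.1 hp, rfl⟩
  · rintro ⟨hn, hu⟩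
    rcases und_mem_addUnknowns.1 hu with hu | hocc
    · exact hnu ⟨hneg.1 hn, hu⟩
    · exact hocc ⟨_, hneg.1 hn, rfl⟩

/-- The added literals `u(f)` never match the body of a state constraint. -/
theorem closedUnderSC_addUnknowns {c : StateConstraint F} (hS : ClosedUnderSC c S) :
    ClosedUnderSC c (addUnknowns S) := fun hbody =>
  FLit.toE_mem_addUnknowns.2 (hS fun l hl => FLit.toE_mem_addUnknowns.1 (hbody l hl))

end addUnknowns

end

theorem stmt15_general {F E : Type} (D : Set F) (AD : ActionDesc F E)
    (I : Set (ELit F)) (Fs : Set F) :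
    ∀ σ ∈ gammaSet D AD I Fs,
      CompleteE σ ∧ ConsistentE σ ∧ ∀ c ∈ AD.sc, ClosedUnderSC c σ := by
  rintro σ ⟨I', -, hex, rfl⟩
  rw [gamma_eq_addUnknowns]
  exact ⟨completeE_addUnknowns _, consistentE_addUnknowns hex,
    fun c hc => closedUnderSC_addUnknowns (closedUnderSC_Cn AD.sc _ hc)⟩

/-- Every element of the completion `γ(I,F)` is a state of `τ(AD)`:
a complete and consistent set of extended literals closed under the state
constraints of `AD`. -/
theorem stmt15 {F E : Type} [Fintype F] (D : Set F) (AD : ActionDesc F E)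
    (I : Set (ELit F)) (hlit : IsLitSet I) (hcons : ConsistentE I)
    (Fs : Set F) :
    ∀ σ ∈ gammaSet D AD I Fs,
      CompleteE σ ∧ ConsistentE σ ∧ ∀ c ∈ AD.sc, ClosedUnderSC c σ :=
  stmt15_general D AD I Fs

end ACIR
end
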